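/- Assume condition C1. Then for every n ≥ 1, almost surely P(ξ_n = η_n = 1 | H_{n−1} ∨ G_n) = P(ξ_n = η_n = −1 | H_{n−1} ∨ G_n) and P(ξ_n = 1, η_n = −1 | H_{n−1} ∨ G_n) = P(ξ_n = −1, η_n = 1 | H_{n−1} ∨ G_n). -/

import Mathlib

open MeasureTheory ProbabilityTheory Filter Set

noncomputable section

variable {Ω : Type*}

/-- `Q n = 1` if the `n`-th moves agree, `0` if they are opposite. -/
def Qproc (ξ η : ℕ → Ω → ℝ) (n : ℕ) (ω : Ω) : ℕ :=
  if ξ n ω = η n ω then 1 else 0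

/-- `T n = ∑_{k=1}^n Q k`, the number of common movements up to step `n`. -/
def Tproc (ξ η : ℕ → Ω → ℝ) (n : ℕ) (ω : Ω) : ℕ :=
  ∑ k ∈ Finset.Icc 1 n, Qproc ξ η k ω

/-- `S n = n - T n`, the number of counter movements up to step `n`. -/
def Sproc (ξ η : ℕ → Ω → ℝ) (n : ℕ) (ω : Ω) : ℕ :=
  n - Tproc ξ η n ω

/-- `α n = inf {k ≥ 1 : T k = n}`, with `inf ∅ = ⊤`, valued in `ℕ∞`. -/
def alphaProc (ξ η : ℕ → Ω → ℝ) (n : ℕ) (ω : Ω) : ℕ∞ :=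
  ⨅ (k : ℕ) (_ : 1 ≤ k ∧ Tproc ξ η k ω = n), (k : ℕ∞)

/-- `β n = inf {k ≥ 1 : S k = n}`, with `inf ∅ = ⊤`, valued in `ℕ∞`. -/
def betaProc (ξ η : ℕ → Ω → ℝ) (n : ℕ) (ω : Ω) : ℕ∞ :=
  ⨅ (k : ℕ) (_ : 1 ≤ k ∧ Sproc ξ η k ω = n), (k : ℕ∞)

/-- `ξ̃_{α n}`: equal to `ξ_i` on `{α n = i}` (`i < ∞`) and to `ζ n` on `{α n = ∞}`. -/
def xiAlpha (ξ η ζ : ℕ → Ω → ℝ) (n : ℕ) (ω : Ω) : ℝ :=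
  if alphaProc ξ η n ω = ⊤ then ζ n ω else ξ (alphaProc ξ η n ω).toNat ω

/-- `ξ̃_{β m}`: equal to `ξ_i` on `{β m = i}` (`i < ∞`) and to `ψ m` on `{β m = ∞}`. -/
def xiBeta (ξ η ψ : ℕ → Ω → ℝ) (m : ℕ) (ω : Ω) : ℝ :=
  if betaProc ξ η m ω = ⊤ then ψ m ω else ξ (betaProc ξ η m ω).toNat ω

/-- The common-movement walk `X n = ∑_{i=1}^n ξ̃_{α i}`. -/
def Xproc (ξ η ζ : ℕ → Ω → ℝ) (n : ℕ) (ω : Ω) : ℝ :=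
  ∑ i ∈ Finset.Icc 1 n, xiAlpha ξ η ζ i ω

/-- The counter-movement walk `Y n = ∑_{i=1}^n ξ̃_{β i}`. -/
def Yproc (ξ η ψ : ℕ → Ω → ℝ) (n : ℕ) (ω : Ω) : ℝ :=
  ∑ i ∈ Finset.Icc 1 n, xiBeta ξ η ψ i ω

/-- `G n = σ(T k, 1 ≤ k ≤ n)`. -/
def Gfield (ξ η : ℕ → Ω → ℝ) (n : ℕ) : MeasurableSpace Ω :=
  ⨆ k ∈ Finset.Icc 1 n, MeasurableSpace.comap (fun ω => Tproc ξ η k ω) inferInstance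

/-- `G ∞ = σ(T k, k ≥ 1)`. -/
def GfieldInf (ξ η : ℕ → Ω → ℝ) : MeasurableSpace Ω :=
  ⨆ k ∈ {k : ℕ | 1 ≤ k}, MeasurableSpace.comap (fun ω => Tproc ξ η k ω) inferInstance

/-- `H n = σ(ξ k, η k, 1 ≤ k ≤ n)`. -/
def Hfield (ξ η : ℕ → Ω → ℝ) (n : ℕ) : MeasurableSpace Ω :=
  ⨆ k ∈ Finset.Icc 1 n,
    (MeasurableSpace.comap (ξ k) inferInstance ⊔ MeasurableSpace.comap (η k) inferInstance)

/-- `mA` and `mB` are conditionally independent given `m` (under `P`):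
`P(A ∩ B | m) = P(A | m) * P(B | m)` a.s. for all `A ∈ mA`, `B ∈ mB`. -/
def CondIndepGiven [MeasurableSpace Ω] (P : Measure Ω) (m mA mB : MeasurableSpace Ω) : Prop :=
  ∀ A B : Set Ω, MeasurableSet[mA] A → MeasurableSet[mB] B →
    (P[(A ∩ B).indicator (fun _ => (1 : ℝ)) | m]) =ᵐ[P]
      fun ω => (P[A.indicator (fun _ => (1 : ℝ)) | m]) ω * (P[B.indicator (fun _ => (1 : ℝ)) | m]) ω


/-!
Given `F (n - 1)`, both `ξ n` and `η n` are fair coins, so the cells `{ξ n = η n = 1}` and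
`{ξ n = η n = -1}` have the same `F (n - 1)`-conditional probability, and so do the two
off-diagonal cells. Now `H (n - 1) ∨ G n ≤ F (n - 1) ∨ σ(T n)`, and `T n = T (n - 1) + Q n` where
`Q n` is constant on each of these pairs of cells; on such a pair, `F (n - 1) ∨ σ(T n)` therefore
has the same trace as `F (n - 1)`, and the equality of conditional probabilities passes to
`H (n - 1) ∨ G n`.
-/

section General

variable {Ω β : Type*} {m mΩ : MeasurableSpace Ω} {mβ : MeasurableSpace β}

theorem exists_measurableSet_inter_eq_of_eqOn {f g : Ω → β} {C s : Set Ω}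
    (hg : Measurable[m] g) (hfg : EqOn f g C) (hs : MeasurableSet[m ⊔ mβ.comap f] s) :
    ∃ D, MeasurableSet[m] D ∧ C ∩ s = C ∩ D := by
  -- Pass to the subtype `C`, on which `σ(f) = σ(g) ≤ m`.
  have htrace : MeasurableSet[(m ⊔ mβ.comap f).comap ((↑) : C → Ω)] ((↑) ⁻¹' s) := ⟨s, hs, rfl⟩
  have hfC : f ∘ ((↑) : C → Ω) = g ∘ (↑) := funext fun ω => hfg ω.2
  rw [MeasurableSpace.comap_sup, MeasurableSpace.comap_comp, hfC, ← MeasurableSpace.comap_comp,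
    sup_eq_left.mpr (MeasurableSpace.comap_mono hg.comap_le)] at htrace
  obtain ⟨D, hD, hDs⟩ := htrace
  exact ⟨D, hD, (Subtype.preimage_coe_eq_preimage_coe_iff.mp hDs).symm⟩

theorem measure_inter_eq_of_eqOn {P : Measure Ω} {f g : Ω → β} {A B : Set Ω}
    (hg : Measurable[m] g) (hfg : EqOn f g (A ∪ B))
    (hAB : ∀ D, MeasurableSet[m] D → P (A ∩ D) = P (B ∩ D))
    {s : Set Ω} (hs : MeasurableSet[m ⊔ mβ.comap f] s) : P (A ∩ s) = P (B ∩ s) := by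
  obtain ⟨D, hD, hsD⟩ := exists_measurableSet_inter_eq_of_eqOn hg hfg hs
  have restrict : ∀ X ⊆ A ∪ B, X ∩ s = X ∩ D := fun X hX => by
    rw [← Set.inter_eq_left.mpr hX, Set.inter_assoc, hsD, ← Set.inter_assoc]
  rw [restrict A Set.subset_union_left, restrict B Set.subset_union_right, hAB D hD]

theorem setIntegral_indicator_one {P : Measure Ω} {A s : Set Ω} (hA : MeasurableSet A) :
    ∫ ω in s, A.indicator (fun _ => (1 : ℝ)) ω ∂P = P.real (A ∩ s) := by
  rw [integral_indicator_const 1 hA, smul_eq_mul, mul_one, measureReal_restrict_apply hA]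

theorem condExp_indicator_ae_eq_of_measure_inter_eq {P : Measure Ω} [IsFiniteMeasure P]
    (hm : m ≤ mΩ) {A B : Set Ω} (hA : MeasurableSet A) (hB : MeasurableSet B)
    (hAB : ∀ s, MeasurableSet[m] s → P (A ∩ s) = P (B ∩ s)) :
    P[A.indicator (fun _ => (1 : ℝ)) | m] =ᵐ[P] P[B.indicator (fun _ => (1 : ℝ)) | m] := by
  refine ae_eq_condExp_of_forall_setIntegral_eq hm ((integrable_const 1).indicator hB)
    (fun s _ _ => integrable_condExp.integrableOn) (fun s hs _ => ?_)
    stronglyMeasurable_condExp.aestronglyMeasurable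
  rw [setIntegral_condExp hm ((integrable_const 1).indicator hA) hs,
    setIntegral_indicator_one hA, setIntegral_indicator_one hB,
    measureReal_eq_measureReal_iff, hAB s hs]

theorem measureReal_inter_eq_half {P : Measure Ω} [IsFiniteMeasure P] (hm : m ≤ mΩ)
    {E D : Set Ω} (hE : MeasurableSet E) (hD : MeasurableSet[m] D)
    (hhalf : P[E.indicator (fun _ => (1 : ℝ)) | m] =ᵐ[P] fun _ => 1 / 2) :
    P.real (E ∩ D) = P.real D / 2 := by
  rw [← setIntegral_indicator_one hE,
    ← setIntegral_condExp hm ((integrable_const 1).indicator hE) hD,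
    integral_congr_ae (ae_restrict_of_ae hhalf), setIntegral_const, smul_eq_mul]
  ring

theorem measure_inter_eq_of_measureReal_inter_eq_half {P : Measure Ω} [IsFiniteMeasure P]
    {E F D : Set Ω} (hE : MeasurableSet E) (hF : MeasurableSet F)
    (hEh : P.real (E ∩ D) = P.real D / 2) (hFh : P.real (F ∩ D) = P.real D / 2) :
    P (E ∩ F ∩ D) = P (Eᶜ ∩ Fᶜ ∩ D) ∧ P (E ∩ Fᶜ ∩ D) = P (Eᶜ ∩ F ∩ D) := by
  have split_left : ∀ {X Y : Set Ω}, MeasurableSet Y →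
      P.real (X ∩ Y ∩ D) + P.real (X ∩ Yᶜ ∩ D) = P.real (X ∩ D) := fun {X Y} hY => by
    rw [← measureReal_inter_add_sdiff (s := X ∩ D) hY, Set.sdiff_eq, Set.inter_right_comm X Y,
      Set.inter_right_comm X Yᶜ]
  have split_right : ∀ {X Y : Set Ω}, MeasurableSet X →
      P.real (X ∩ Y ∩ D) + P.real (Xᶜ ∩ Y ∩ D) = P.real (Y ∩ D) := fun {X Y} hX => by
    rw [← measureReal_inter_add_sdiff (s := Y ∩ D) hX, Set.sdiff_eq, Set.inter_comm _ X,
      Set.inter_comm _ Xᶜ, Set.inter_assoc, Set.inter_assoc]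
  have hEc : P.real (Eᶜ ∩ D) = P.real D / 2 := by
    have hsplit := split_left (X := Set.univ) hE
    simp only [Set.univ_inter] at hsplit
    linarith
  have hFc : P.real (Fᶜ ∩ D) = P.real D / 2 := by
    have hsplit := split_left (X := Set.univ) hF
    simp only [Set.univ_inter] at hsplit
    linarith
  have h₁ := split_left (X := E) hF
  have h₂ := split_left (X := Eᶜ) hF
  have h₃ := split_right (Y := F) hE
  have h₄ := split_right (Y := Fᶜ) hE
  constructor <;> rw [← measureReal_eq_measureReal_iff] <;> linarith

theorem setOf_eq_neg_one_eq_compl {X : Ω → ℝ} (hX : ∀ ω, X ω = 1 ∨ X ω = -1) :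
    {ω | X ω = -1} = {ω | X ω = 1}ᶜ := by
  ext ω
  rcases hX ω with h | h <;> simp only [Set.mem_ofPred_eq, Set.mem_compl_iff, h] <;> norm_num

theorem measure_sign_cells_eq {P : Measure Ω} [IsFiniteMeasure P] (hm : m ≤ mΩ) {X Y : Ω → ℝ} (hXm : Measurable X) (hYm : Measurable Y)
    (hX : ∀ ω, X ω = 1 ∨ X ω = -1) (hY : ∀ ω, Y ω = 1 ∨ Y ω = -1)
    (hXh : P[{ω | X ω = 1}.indicator (fun _ => (1 : ℝ)) | m] =ᵐ[P] fun _ => 1 / 2)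
    (hYh : P[{ω | Y ω = 1}.indicator (fun _ => (1 : ℝ)) | m] =ᵐ[P] fun _ => 1 / 2)
    {D : Set Ω} (hD : MeasurableSet[m] D) :
    P ({ω | X ω = 1 ∧ Y ω = 1} ∩ D) = P ({ω | X ω = -1 ∧ Y ω = -1} ∩ D) ∧
      P ({ω | X ω = 1 ∧ Y ω = -1} ∩ D) = P ({ω | X ω = -1 ∧ Y ω = 1} ∩ D) := by
  have hX1 : MeasurableSet {ω | X ω = 1} := hXm (measurableSet_singleton 1)
  have hY1 : MeasurableSet {ω | Y ω = 1} := hYm (measurableSet_singleton 1)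
  simp only [Set.ofPred_and, setOf_eq_neg_one_eq_compl hX, setOf_eq_neg_one_eq_compl hY]
  exact measure_inter_eq_of_measureReal_inter_eq_half hX1 hY1
    (measureReal_inter_eq_half hm hX1 hD hXh) (measureReal_inter_eq_half hm hY1 hD hYh)

end General

section RandomWalks

variable {Ω : Type*} {ξ η : ℕ → Ω → ℝ}

theorem measurable_Qproc {m : MeasurableSpace Ω} {k : ℕ} (hξ : Measurable[m] (ξ k))
    (hη : Measurable[m] (η k)) : Measurable[m] (Qproc ξ η k) :=
  Measurable.ite (measurableSet_eq_fun hξ hη) measurable_const measurable_const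

theorem Tproc_succ (n : ℕ) (ω : Ω) :
    Tproc ξ η (n + 1) ω = Tproc ξ η n ω + Qproc ξ η (n + 1) ω :=
  Finset.sum_Icc_succ_top (by omega) _

variable [mΩ : MeasurableSpace Ω] {F : Filtration ℕ mΩ}
  (hξm : ∀ n, 1 ≤ n → Measurable[F n] (ξ n)) (hηm : ∀ n, 1 ≤ n → Measurable[F n] (η n))
include hξm hηm

theorem measurable_Tproc (n : ℕ) : Measurable[F n] (Tproc ξ η n) :=
  Finset.measurable_sum _ fun k hk => (Finset.mem_Icc.mp hk).elim fun h1 hkn =>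
    measurable_Qproc ((hξm k h1).mono (F.mono hkn) le_rfl) ((hηm k h1).mono (F.mono hkn) le_rfl)

theorem Hfield_le (n : ℕ) : Hfield ξ η n ≤ F n :=
  iSup₂_le fun k hk => (Finset.mem_Icc.mp hk).elim fun h1 hkn =>
    sup_le ((hξm k h1).mono (F.mono hkn) le_rfl).comap_le
      ((hηm k h1).mono (F.mono hkn) le_rfl).comap_le

theorem Gfield_succ_le (n : ℕ) :
    Gfield ξ η (n + 1) ≤ F n ⊔ MeasurableSpace.comap (Tproc ξ η (n + 1)) inferInstance := by
  refine iSup₂_le fun k hk => ?_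
  rcases (Finset.mem_Icc.mp hk).2.eq_or_lt with rfl | hlt
  · exact le_sup_right
  · exact ((measurable_Tproc hξm hηm k).mono (F.mono (by omega)) le_rfl).comap_le.trans
      le_sup_left

theorem condExp_indicator_ae_eq_of_Qproc_eqOn {P : Measure Ω} [IsFiniteMeasure P] {n c : ℕ}
    {A B : Set Ω} (hA : MeasurableSet A) (hB : MeasurableSet B)
    (hc : ∀ ω ∈ A ∪ B, Qproc ξ η (n + 1) ω = c)
    (hAB : ∀ D, MeasurableSet[F n] D → P (A ∩ D) = P (B ∩ D)) :
    P[A.indicator (fun _ => (1 : ℝ)) | Hfield ξ η n ⊔ Gfield ξ η (n + 1)] =ᵐ[P]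
      P[B.indicator (fun _ => (1 : ℝ)) | Hfield ξ η n ⊔ Gfield ξ η (n + 1)] := by
  have hle : Hfield ξ η n ⊔ Gfield ξ η (n + 1) ≤
      F n ⊔ MeasurableSpace.comap (Tproc ξ η (n + 1)) inferInstance :=
    sup_le ((Hfield_le hξm hηm n).trans le_sup_left) (Gfield_succ_le hξm hηm n)
  have hT : Measurable (Tproc ξ η (n + 1)) := (measurable_Tproc hξm hηm _).mono (F.le _) le_rfl
  refine condExp_indicator_ae_eq_of_measure_inter_eq
    (hle.trans (sup_le (F.le n) hT.comap_le)) hA hB fun s hs => ?_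
  exact measure_inter_eq_of_eqOn ((measurable_Tproc hξm hηm n).add_const c)
    (fun ω hω => by rw [Tproc_succ, hc ω hω]) hAB (hle s hs)

end RandomWalks

theorem stmt_12_general
    {Ω : Type*} [mΩ : MeasurableSpace Ω] (P : Measure Ω) [IsProbabilityMeasure P]
    (F : MeasureTheory.Filtration ℕ mΩ)
    (ξ η : ℕ → Ω → ℝ)
    (hξm : ∀ n, 1 ≤ n → Measurable[F n] (ξ n))
    (hηm : ∀ n, 1 ≤ n → Measurable[F n] (η n))
    (hξv : ∀ n ω, ξ n ω = 1 ∨ ξ n ω = -1)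
    (hηv : ∀ n ω, η n ω = 1 ∨ η n ω = -1)
    (hhalf : ∀ n, 1 ≤ n →
      (P[({ω | ξ n ω = 1}).indicator (fun _ => (1 : ℝ)) | F (n - 1)] =ᵐ[P] fun _ => 1 / 2) ∧
      (P[({ω | ξ n ω = -1}).indicator (fun _ => (1 : ℝ)) | F (n - 1)] =ᵐ[P] fun _ => 1 / 2) ∧
      (P[({ω | η n ω = 1}).indicator (fun _ => (1 : ℝ)) | F (n - 1)] =ᵐ[P] fun _ => 1 / 2) ∧
      (P[({ω | η n ω = -1}).indicator (fun _ => (1 : ℝ)) | F (n - 1)] =ᵐ[P] fun _ => 1 / 2)) :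
    ∀ n : ℕ, 1 ≤ n →
      (P[({ω | ξ n ω = 1 ∧ η n ω = 1}).indicator (fun _ => (1 : ℝ)) |
          Hfield ξ η (n - 1) ⊔ Gfield ξ η n] =ᵐ[P]
        P[({ω | ξ n ω = -1 ∧ η n ω = -1}).indicator (fun _ => (1 : ℝ)) |
          Hfield ξ η (n - 1) ⊔ Gfield ξ η n]) ∧
      (P[({ω | ξ n ω = 1 ∧ η n ω = -1}).indicator (fun _ => (1 : ℝ)) |
          Hfield ξ η (n - 1) ⊔ Gfield ξ η n] =ᵐ[P]
        P[({ω | ξ n ω = -1 ∧ η n ω = 1}).indicator (fun _ => (1 : ℝ)) |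
          Hfield ξ η (n - 1) ⊔ Gfield ξ η n]) := by
  intro n hn
  obtain ⟨n, rfl⟩ := Nat.exists_eq_add_of_le' hn
  obtain ⟨hξh, -, hηh, -⟩ := hhalf (n + 1) hn
  rw [Nat.add_sub_cancel] at hξh hηh ⊢
  have hξ : Measurable (ξ (n + 1)) := (hξm _ hn).mono (F.le _) le_rfl
  have hη : Measurable (η (n + 1)) := (hηm _ hn).mono (F.le _) le_rfl
  have hcell (a b : ℝ) : MeasurableSet {ω | ξ (n + 1) ω = a ∧ η (n + 1) ω = b} :=
    (hξ (measurableSet_singleton a)).inter (hη (measurableSet_singleton b))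
  have hcells (D : Set Ω) (hD : MeasurableSet[F n] D) :=
    measure_sign_cells_eq (F.le n) hξ hη (hξv _) (hηv _) hξh hηh hD
  constructor
  · refine condExp_indicator_ae_eq_of_Qproc_eqOn hξm hηm (hcell 1 1) (hcell (-1) (-1)) (c := 1)
      ?_ fun D hD => (hcells D hD).1
    rintro ω (⟨h₁, h₂⟩ | ⟨h₁, h₂⟩) <;> simp [Qproc, h₁, h₂]
  · refine condExp_indicator_ae_eq_of_Qproc_eqOn hξm hηm (hcell 1 (-1)) (hcell (-1) 1) (c := 0)
      ?_ fun D hD => (hcells D hD).2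
    rintro ω (⟨h₁, h₂⟩ | ⟨h₁, h₂⟩) <;> norm_num [Qproc, h₁, h₂]

theorem stmt_12
    {Ω : Type*} [mΩ : MeasurableSpace Ω] (P : Measure Ω) [IsProbabilityMeasure P]
    (F : MeasureTheory.Filtration ℕ mΩ) (hF0 : F 0 = ⊥)
    (ξ η : ℕ → Ω → ℝ)
    (hξm : ∀ n, 1 ≤ n → Measurable[F n] (ξ n))
    (hηm : ∀ n, 1 ≤ n → Measurable[F n] (η n))
    (hξv : ∀ n ω, ξ n ω = 1 ∨ ξ n ω = -1)
    (hηv : ∀ n ω, η n ω = 1 ∨ η n ω = -1)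
    (hhalf : ∀ n, 1 ≤ n →
      (P[({ω | ξ n ω = 1}).indicator (fun _ => (1 : ℝ)) | F (n - 1)] =ᵐ[P] fun _ => 1 / 2) ∧
      (P[({ω | ξ n ω = -1}).indicator (fun _ => (1 : ℝ)) | F (n - 1)] =ᵐ[P] fun _ => 1 / 2) ∧
      (P[({ω | η n ω = 1}).indicator (fun _ => (1 : ℝ)) | F (n - 1)] =ᵐ[P] fun _ => 1 / 2) ∧
      (P[({ω | η n ω = -1}).indicator (fun _ => (1 : ℝ)) | F (n - 1)] =ᵐ[P] fun _ => 1 / 2))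
    (hC1 : ∀ n : ℕ, CondIndepGiven P (Gfield ξ η n) (Hfield ξ η n) (GfieldInf ξ η)) :
    ∀ n : ℕ, 1 ≤ n →
      (P[({ω | ξ n ω = 1 ∧ η n ω = 1}).indicator (fun _ => (1 : ℝ)) |
          Hfield ξ η (n - 1) ⊔ Gfield ξ η n] =ᵐ[P]
        P[({ω | ξ n ω = -1 ∧ η n ω = -1}).indicator (fun _ => (1 : ℝ)) |
          Hfield ξ η (n - 1) ⊔ Gfield ξ η n]) ∧
      (P[({ω | ξ n ω = 1 ∧ η n ω = -1}).indicator (fun _ => (1 : ℝ)) |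
          Hfield ξ η (n - 1) ⊔ Gfield ξ η n] =ᵐ[P]
        P[({ω | ξ n ω = -1 ∧ η n ω = 1}).indicator (fun _ => (1 : ℝ)) |
          Hfield ξ η (n - 1) ⊔ Gfield ξ η n]) :=
  stmt_12_general (mΩ := mΩ) P F ξ η hξm hηm hξv hηv hhalf
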